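/- For q ∈ [0,1], μ > 0, and m ≥ 2, the zero-accumulation probability combined with fresh Poisson arrivals satisfies: if the non-empty probability in slot 2 is T² = 1 - e^{-μ₂}(e^{-μ₁} + μ₁ e^{-μ₁} q) (exact probabilistic statistics), and the Poisson approximation gives T̃² = 1 - e^{-μ₂ - (μ₁ - q(1-e^{-μ₁}))}, then T² ≤ T̃², i.e., the Poisson approximation overestimates the non-empty probability. -/

import Mathlib

/-!
Cancelling `e^{-μ₁}` and writing `a = 1 - e^{-μ₁}`, the claim is `exp (q a) ≤ 1 + μ₁ q`.
By convexity of `exp` in `q ∈ [0, 1]`, `exp (q a) ≤ 1 + q (exp a - 1)`, so it suffices that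
`exp a ≤ 1 + μ₁`, i.e. `1 - e^{-μ₁} ≤ log (1 + μ₁)`. Both sides vanish at `μ₁ = 0`, and their
derivatives compare as `e^{-μ₁} ≤ 1 / (1 + μ₁)`.
-/

open Real

lemma one_sub_exp_neg_le_log_one_add {x : ℝ} (hx : 0 ≤ x) : 1 - exp (-x) ≤ log (1 + x) := by
  set f : ℝ → ℝ := fun y ↦ log (1 + y) + exp (-y)
  have hderiv : ∀ y : ℝ, 0 ≤ y → HasDerivAt f ((1 + y)⁻¹ - exp (-y)) y := fun y hy ↦ by
    have hlog := ((hasDerivAt_id y).const_add 1).log (by positivity)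
    have hexp := (hasDerivAt_neg y).exp
    exact (hlog.add hexp).congr_deriv (by simp [sub_eq_add_neg])
  have hmono : MonotoneOn f (Set.Ici 0) := by
    refine monotoneOn_of_hasDerivWithinAt_nonneg (convex_Ici 0)
      (fun y hy ↦ (hderiv y hy).continuousAt.continuousWithinAt)
      (fun y hy ↦ (hderiv y (interior_subset hy)).hasDerivWithinAt) fun y hy ↦ ?_
    rw [interior_Ici] at hy
    have hy : 0 < y := hy
    rw [sub_nonneg, exp_neg]
    exact inv_anti₀ (by positivity) (by linarith [add_one_le_exp y])
  have := hmono (Set.mem_Ici.2 le_rfl) (Set.mem_Ici.2 hx) hx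
  simp only [f, add_zero, log_one, neg_zero, exp_zero, zero_add] at this
  linarith

lemma exp_mul_le_one_add_mul_exp_sub_one {t : ℝ} (ht₀ : 0 ≤ t) (ht₁ : t ≤ 1) (a : ℝ) :
    exp (t * a) ≤ 1 + t * (exp a - 1) := by
  have := convexOn_exp.2 (Set.mem_univ 0) (Set.mem_univ a) (sub_nonneg.2 ht₁) ht₀ (by ring)
  simp only [smul_eq_mul, mul_zero, zero_add, exp_zero] at this
  linarith

lemma exp_mul_one_sub_exp_neg_le {μ q : ℝ} (hμ : 0 ≤ μ) (hq₀ : 0 ≤ q) (hq₁ : q ≤ 1) :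
    exp (q * (1 - exp (-μ))) ≤ 1 + μ * q := by
  have hexp : exp (1 - exp (-μ)) ≤ 1 + μ :=
    (le_log_iff_exp_le (by linarith)).1 (one_sub_exp_neg_le_log_one_add hμ)
  calc exp (q * (1 - exp (-μ))) ≤ 1 + q * (exp (1 - exp (-μ)) - 1) :=
        exp_mul_le_one_add_mul_exp_sub_one hq₀ hq₁ _
    _ ≤ 1 + μ * q := by nlinarith

theorem poisson_approx_overestimates_general (μ₁ μ₂ q : ℝ)
    (hμ₁ : 0 ≤ μ₁) (hq0 : 0 ≤ q) (hq1 : q ≤ 1) :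
    (Real.exp (-μ₁) * (1 + μ₁ * q) ≥ Real.exp (-(μ₁ - q * (1 - Real.exp (-μ₁))))) ∧
    (1 - Real.exp (-μ₂) * (Real.exp (-μ₁) + μ₁ * Real.exp (-μ₁) * q)
      ≤ 1 - Real.exp (-μ₂ - (μ₁ - q * (1 - Real.exp (-μ₁))))) := by
  have hslot₁ : exp (-(μ₁ - q * (1 - exp (-μ₁)))) ≤ exp (-μ₁) * (1 + μ₁ * q) := by
    rw [neg_sub', sub_eq_add_neg, neg_neg, exp_add]
    exact mul_le_mul_of_nonneg_left (exp_mul_one_sub_exp_neg_le hμ₁ hq0 hq1) (exp_pos _).le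
  refine ⟨hslot₁, ?_⟩
  have hslot₂ := mul_le_mul_of_nonneg_left hslot₁ (exp_pos (-μ₂)).le
  rw [← exp_add, ← sub_eq_add_neg] at hslot₂
  linarith

/-- The Poisson approximation overestimates the non-empty probability:
`1 - e^{-μ₂}(e^{-μ₁} + μ₁ e^{-μ₁} q) ≤ 1 - e^{-μ₂ - (μ₁ - q(1-e^{-μ₁}))}`,
equivalently `e^{-μ₁}(1 + μ₁ q) ≥ e^{-(μ₁ - q(1 - e^{-μ₁}))}`. -/
theorem poisson_approx_overestimates (μ₁ μ₂ q : ℝ)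
    (hμ₁ : 0 ≤ μ₁) (hμ₂ : 0 ≤ μ₂) (hq0 : 0 ≤ q) (hq1 : q ≤ 1) :
    (Real.exp (-μ₁) * (1 + μ₁ * q) ≥ Real.exp (-(μ₁ - q * (1 - Real.exp (-μ₁))))) ∧
    (1 - Real.exp (-μ₂) * (Real.exp (-μ₁) + μ₁ * Real.exp (-μ₁) * q)
      ≤ 1 - Real.exp (-μ₂ - (μ₁ - q * (1 - Real.exp (-μ₁))))) :=
  poisson_approx_overestimates_general μ₁ μ₂ q hμ₁ hq0 hq1
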